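/- Let d ≥ 1, σ ≥ 0, λ₀ > 0, δ ∈ (0,1), θ₀ > 2λ₀, C_G > 0 and a > 0, and set λ(t) = λ₀(1+(1+t)^{−δ}). Fix θ₁ > 0 with 2θ₁ < θ₀ − 2λ₀. There exists a constant C₂ > 0, depending only on C_G, σ, θ₀, λ₀, δ and θ₁, such that the following holds. Let G^r : (ℤ^d∖{0}) × [0,∞) → ℂ satisfy |G^r_k(τ)| ≤ C_G ⟨k⟩^{−1} e^{−θ₀⟨|k|τ⟩} for all k ≠ 0 and τ ≥ 0, and let S : (ℤ^d∖{0}) × [0,∞) → ℂ be measurable with F[S](s,λ(s)) ≤ a e^{−θ₁⟨s⟩^{1−δ}} for all s ≥ 0. Define E_k(t) = S_k(t) + ∫₀^t G^r_k(t−s) S_k(s) ds. Then for all t ≥ 0: F[E](t,λ(t)) ≤ C₂ a e^{−θ₁⟨t⟩^{1−δ}}. -/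

import Mathlib

/-!
Per Fourier mode, the weight at time `t` is moved back to time `s ≤ t` at the cost of a factor
`√2^σ e^{λ(t)|k|(t-s)} ⟨k(t-s)⟩^σ` (Peetre's inequality, the 1-Lipschitz bound for the joint
bracket, and `λ` decreasing). The Green kernel's decay `e^{-θ₀⟨|k|(t-s)⟩}` absorbs this factor
and leaves `e^{-2θ₁⟨t-s⟩}`, so after summing over modes the Duhamel term is bounded by a time
convolution. Finally `⟨t⟩^{1-δ} ≤ ⟨s⟩^{1-δ} + ⟨t-s⟩` turns `e^{-2θ₁⟨t-s⟩} e^{-θ₁⟨s⟩^{1-δ}}`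
into `e^{-θ₁⟨t⟩^{1-δ}} e^{-θ₁(t-s)}`, whose integral over `s ∈ (0,t]` is at most `1/θ₁`.
-/

open MeasureTheory
open scoped ENNReal

noncomputable section

/-- `ℝ^d` with the Euclidean norm. -/
abbrev Ed (d : ℕ) := EuclideanSpace ℝ (Fin d)

/-- Embedding of `ℤ^d` into `ℝ^d`. -/
def toE {d : ℕ} (k : Fin d → ℤ) : Ed d := WithLp.toLp 2 (fun i => (k i : ℝ))

/-- Japanese bracket of a scalar: `⟨u⟩ = (1+u²)^{1/2}`. -/
def jap (u : ℝ) : ℝ := Real.sqrt (1 + u ^ 2)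

/-- Japanese bracket of a vector: `⟨η⟩ = (1+|η|²)^{1/2}`. -/
def japV {d : ℕ} (η : Ed d) : ℝ := Real.sqrt (1 + ‖η‖ ^ 2)

/-- Joint bracket `⟨k,η⟩ = (1+|k|²+|η|²)^{1/2}`. -/
def japKV {d : ℕ} (k : Fin d → ℤ) (η : Ed d) : ℝ := Real.sqrt (1 + ‖toE k‖ ^ 2 + ‖η‖ ^ 2)

/-- The analytic weight `A_{k,η}(z) = e^{z⟨k,η⟩} ⟨η⟩^σ`. -/
def wA (d : ℕ) (σ z : ℝ) (k : Fin d → ℤ) (η : Ed d) : ℝ :=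
  Real.exp (z * japKV k η) * japV η ^ σ

/-- The time-dependent analyticity radius `λ(t) = λ₀(1+(1+t)^{-δ})`. -/
def lam (lam0 δ t : ℝ) : ℝ := lam0 * (1 + (1 + t) ^ (-δ))

/-- The weighted norm `F[S](t,z) = Σ_{k≠0} A_{k,kt}(z) |S_k(t)|`, valued in `ℝ≥0∞`. -/
def Fnorm (d : ℕ) (σ : ℝ) (S : (Fin d → ℤ) → ℝ → ℂ) (t z : ℝ) : ℝ≥0∞ :=
  ∑' k : {k : Fin d → ℤ // k ≠ 0}, ENNReal.ofReal (wA d σ z k.1 (t • toE k.1) * ‖S k.1 t‖)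

open Real Set
open scoped Nat

lemma sqrt_add_sq_le_add {c x y b : ℝ} (hc : 0 ≤ c) (hb : 0 ≤ b) (hxy : |x| ≤ |y| + b) :
    √(c + x ^ 2) ≤ √(c + y ^ 2) + b := by
  have hy : |y| ≤ √(c + y ^ 2) := by
    rw [← sqrt_sq_eq_abs]; exact sqrt_le_sqrt (by linarith)
  have hsq : x ^ 2 ≤ (|y| + b) ^ 2 :=
    sq_le_sq' (by linarith [neg_abs_le x]) ((le_abs_self x).trans hxy)
  rw [sqrt_le_iff]
  refine ⟨by positivity, ?_⟩
  nlinarith [sq_sqrt (show 0 ≤ c + y ^ 2 by positivity), sq_abs y]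

lemma one_le_jap (u : ℝ) : 1 ≤ jap u :=
  one_le_sqrt.mpr (by nlinarith [sq_nonneg u])

lemma abs_le_jap (u : ℝ) : |u| ≤ jap u := by
  rw [← sqrt_sq_eq_abs]; exact sqrt_le_sqrt (by linarith)

lemma jap_le_jap {a b : ℝ} (h : |a| ≤ |b|) : jap a ≤ jap b :=
  sqrt_le_sqrt (by nlinarith [sq_le_sq.mpr h])

lemma jap_add_le (a b : ℝ) : jap (a + b) ≤ jap a + |b| :=
  sqrt_add_sq_le_add zero_le_one (abs_nonneg b) (abs_add_le a b)

lemma rpow_jap_add_le {p : ℝ} (hp0 : 0 ≤ p) (hp1 : p ≤ 1) (a b : ℝ) :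
    jap (a + b) ^ p ≤ jap a ^ p + jap b := by
  have hb : |b| ^ p ≤ jap b :=
    calc |b| ^ p ≤ jap b ^ p := rpow_le_rpow (abs_nonneg b) (abs_le_jap b) hp0
      _ ≤ jap b ^ (1 : ℝ) := rpow_le_rpow_of_exponent_le (one_le_jap b) hp1
      _ = jap b := rpow_one _
  calc jap (a + b) ^ p ≤ (jap a + |b|) ^ p :=
        rpow_le_rpow (sqrt_nonneg _) (jap_add_le a b) hp0
    _ ≤ jap a ^ p + |b| ^ p :=
        rpow_add_le_add_rpow (sqrt_nonneg _) (abs_nonneg b) hp0 hp1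
    _ ≤ jap a ^ p + jap b := by gcongr

lemma japV_nonneg {d : ℕ} (η : Ed d) : 0 ≤ japV η := sqrt_nonneg _

lemma japV_add_le {d : ℕ} (η ξ : Ed d) : japV (η + ξ) ≤ √2 * japV η * japV ξ := by
  have h := norm_add_le η ξ
  rw [japV, sqrt_le_iff]
  refine ⟨by have := japV_nonneg η; have := japV_nonneg ξ; positivity, ?_⟩
  rw [mul_pow, mul_pow, japV, japV, sq_sqrt zero_le_two, sq_sqrt (by positivity),
    sq_sqrt (by positivity)]
  nlinarith [norm_nonneg (η + ξ), norm_nonneg η, norm_nonneg ξ, sq_nonneg (‖η‖ - ‖ξ‖),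
    mul_nonneg (sq_nonneg ‖η‖) (sq_nonneg ‖ξ‖)]

lemma japKV_add_le {d : ℕ} (k : Fin d → ℤ) (η ξ : Ed d) :
    japKV k (η + ξ) ≤ japKV k η + ‖ξ‖ := by
  refine sqrt_add_sq_le_add (by positivity) (norm_nonneg ξ) ?_
  rw [abs_norm, abs_norm]; exact norm_add_le η ξ

lemma one_le_norm_toE {d : ℕ} {k : Fin d → ℤ} (hk : k ≠ 0) : 1 ≤ ‖toE k‖ := by
  obtain ⟨i, hi⟩ := Function.ne_iff.mp hk
  have hki : (1 : ℝ) ≤ |(k i : ℝ)| := by exact_mod_cast Int.one_le_abs (by simpa using hi)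
  calc (1 : ℝ) ≤ ‖toE k i‖ := by simpa [toE] using hki
    _ ≤ ‖toE k‖ := PiLp.norm_apply_le (toE k) i

lemma lam_nonneg {lam0 δ t : ℝ} (hl : 0 ≤ lam0) (ht : 0 ≤ t) : 0 ≤ lam lam0 δ t := by
  unfold lam; have := rpow_nonneg (show (0 : ℝ) ≤ 1 + t by linarith) (-δ); positivity

lemma lam_le_two_mul {lam0 δ t : ℝ} (hl : 0 ≤ lam0) (hδ : 0 ≤ δ) (ht : 0 ≤ t) :
    lam lam0 δ t ≤ 2 * lam0 := by
  have : (1 + t) ^ (-δ) ≤ 1 := rpow_le_one_of_one_le_of_nonpos (by linarith) (by linarith)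
  unfold lam; nlinarith

lemma lam_le_lam {lam0 δ s t : ℝ} (hl : 0 ≤ lam0) (hδ : 0 ≤ δ) (hs : 0 ≤ s) (hst : s ≤ t) :
    lam lam0 δ t ≤ lam lam0 δ s := by
  have : (1 + t) ^ (-δ) ≤ (1 + s) ^ (-δ) :=
    rpow_le_rpow_of_nonpos (by linarith) (by linarith) (by linarith)
  unfold lam; nlinarith

lemma wA_nonneg {d : ℕ} (σ z : ℝ) (k : Fin d → ℤ) (η : Ed d) : 0 ≤ wA d σ z k η := by
  unfold wA japV; positivity

lemma wA_add_le {d : ℕ} {σ z z' : ℝ} (hσ : 0 ≤ σ) (hz' : 0 ≤ z') (hz : z' ≤ z)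
    (k : Fin d → ℤ) (η ξ : Ed d) :
    wA d σ z' k (η + ξ) ≤ √2 ^ σ * (exp (z' * ‖ξ‖) * japV ξ ^ σ) * wA d σ z k η := by
  have hexp : z' * japKV k (η + ξ) ≤ z * japKV k η + z' * ‖ξ‖ := by
    have hJ : 0 ≤ japKV k η := sqrt_nonneg _
    nlinarith [mul_le_mul_of_nonneg_left (japKV_add_le k η ξ) hz',
      mul_le_mul_of_nonneg_right hz hJ]
  have hpow : japV (η + ξ) ^ σ ≤ √2 ^ σ * japV η ^ σ * japV ξ ^ σ := by
    rw [← mul_rpow (sqrt_nonneg _) (japV_nonneg η),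
      ← mul_rpow (mul_nonneg (sqrt_nonneg _) (japV_nonneg η)) (japV_nonneg ξ)]
    exact rpow_le_rpow (japV_nonneg _) (japV_add_le η ξ) hσ
  unfold wA
  calc exp (z' * japKV k (η + ξ)) * japV (η + ξ) ^ σ
      ≤ exp (z * japKV k η + z' * ‖ξ‖) * (√2 ^ σ * japV η ^ σ * japV ξ ^ σ) :=
        mul_le_mul (exp_le_exp.mpr hexp) hpow (rpow_nonneg (japV_nonneg _) _) (exp_nonneg _)
    _ = _ := by rw [exp_add]; ring

lemma rpow_mul_exp_neg_le {σ ε x : ℝ} (hε : 0 < ε) (hx : 1 ≤ x) :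
    x ^ σ * exp (-(ε * x)) ≤ (⌈σ⌉₊ ! : ℝ) / ε ^ ⌈σ⌉₊ := by
  set n := ⌈σ⌉₊
  have hfac : (0 : ℝ) < n ! := by exact_mod_cast n.factorial_pos
  have hexp : (ε * x) ^ n ≤ n ! * exp (ε * x) := by
    have := pow_div_factorial_le_exp _ (mul_nonneg hε.le (by linarith : (0 : ℝ) ≤ x)) n
    rwa [div_le_iff₀ hfac, mul_comm (exp _)] at this
  have hσn : x ^ σ ≤ x ^ n := by
    rw [← rpow_natCast]; exact rpow_le_rpow_of_exponent_le hx (Nat.le_ceil σ)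
  rw [le_div_iff₀ (by positivity)]
  calc x ^ σ * exp (-(ε * x)) * ε ^ n = ε ^ n * (x ^ σ * exp (-(ε * x))) := by ring
    _ ≤ ε ^ n * (x ^ n * exp (-(ε * x))) := by gcongr
    _ = (ε * x) ^ n * exp (-(ε * x)) := by ring
    _ ≤ n ! * exp (ε * x) * exp (-(ε * x)) := by gcongr
    _ = n ! := by rw [mul_assoc, ← exp_add, add_neg_cancel, exp_zero, mul_one]

lemma wA_add_smul_mul_exp_neg_le {d : ℕ} {σ z z' Λ κ θ₀ u : ℝ} (hσ : 0 ≤ σ) (hz' : 0 ≤ z')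
    (hz : z' ≤ z) (hΛ : z' ≤ Λ) (hκ : 0 ≤ κ) (hθ : Λ + κ < θ₀) {k : Fin d → ℤ} (hk : k ≠ 0)
    (hu : 0 ≤ u) (η : Ed d) :
    wA d σ z' k (η + u • toE k) * exp (-θ₀ * jap (‖toE k‖ * u)) ≤
      √2 ^ σ * ((⌈σ⌉₊ ! : ℝ) / (θ₀ - Λ - κ) ^ ⌈σ⌉₊) * exp (-κ * jap u) * wA d σ z k η := by
  have hnorm : ‖u • toE k‖ = ‖toE k‖ * u := by rw [norm_smul, norm_of_nonneg hu, mul_comm]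
  have hX : japV (u • toE k) = jap (‖toE k‖ * u) := by rw [japV, jap, hnorm]
  set X := jap (‖toE k‖ * u)
  have hε : 0 < θ₀ - Λ - κ := by linarith
  have hX1 : 1 ≤ X := one_le_jap _
  have hξX : z' * ‖u • toE k‖ ≤ Λ * X := by
    rw [hnorm]
    exact mul_le_mul hΛ ((le_abs_self _).trans (abs_le_jap _)) (by positivity) (by linarith)
  have huX : jap u ≤ X := by
    refine jap_le_jap ?_
    rw [abs_mul, abs_norm]
    exact le_mul_of_one_le_left (abs_nonneg u) (one_le_norm_toE hk)
  have hdecay : exp (Λ * X) * X ^ σ * exp (-θ₀ * X) ≤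
      (⌈σ⌉₊ ! : ℝ) / (θ₀ - Λ - κ) ^ ⌈σ⌉₊ * exp (-κ * jap u) :=
    calc exp (Λ * X) * X ^ σ * exp (-θ₀ * X)
        = X ^ σ * exp (-((θ₀ - Λ - κ) * X)) * exp (-κ * X) := by
          rw [mul_right_comm, ← exp_add, mul_assoc, ← exp_add]; ring_nf
      _ ≤ (⌈σ⌉₊ ! : ℝ) / (θ₀ - Λ - κ) ^ ⌈σ⌉₊ * exp (-κ * jap u) :=
          mul_le_mul (rpow_mul_exp_neg_le hε hX1) (exp_le_exp.mpr (by nlinarith))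
            (exp_nonneg _) (div_nonneg (Nat.cast_nonneg _) (pow_nonneg hε.le _))
  have hW := wA_nonneg σ z k η
  calc wA d σ z' k (η + u • toE k) * exp (-θ₀ * X)
      ≤ √2 ^ σ * (exp (z' * ‖u • toE k‖) * X ^ σ) * wA d σ z k η * exp (-θ₀ * X) := by
        rw [← hX]; gcongr; exact wA_add_le hσ hz' hz k η _
    _ ≤ √2 ^ σ * (exp (Λ * X) * X ^ σ) * wA d σ z k η * exp (-θ₀ * X) := by gcongr
    _ = √2 ^ σ * (exp (Λ * X) * X ^ σ * exp (-θ₀ * X)) * wA d σ z k η := by ring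
    _ ≤ √2 ^ σ * ((⌈σ⌉₊ ! : ℝ) / (θ₀ - Λ - κ) ^ ⌈σ⌉₊ * exp (-κ * jap u)) * wA d σ z k η := by
        gcongr
    _ = _ := by ring

lemma tsum_lintegral_le_lintegral_tsum {α β : Type*} [MeasurableSpace α] [Countable β]
    (μ : Measure α) (f : β → α → ℝ≥0∞) :
    ∑' i, ∫⁻ a, f i a ∂μ ≤ ∫⁻ a, ∑' i, f i a ∂μ := by
  choose g hg_meas hg_le hg_eq using fun i => exists_measurable_le_lintegral_eq μ (f i)
  calc ∑' i, ∫⁻ a, f i a ∂μ = ∫⁻ a, ∑' i, g i a ∂μ := by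
        rw [lintegral_tsum fun i => (hg_meas i).aemeasurable]; exact tsum_congr hg_eq
    _ ≤ ∫⁻ a, ∑' i, f i a ∂μ := lintegral_mono fun a => ENNReal.tsum_le_tsum fun i => hg_le i a

lemma lintegral_Ioc_exp_neg_mul_sub_le {c : ℝ} (hc : 0 < c) (t : ℝ) :
    ∫⁻ s in Ioc 0 t, ENNReal.ofReal (exp (-(c * (t - s)))) ≤ ENNReal.ofReal c⁻¹ := by
  have hsplit : (fun s => exp (-(c * (t - s)))) = fun s => exp (-(c * t)) * exp (c * s) := by
    funext s; rw [← exp_add]; ring_nf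
  have hint : IntegrableOn (fun s => exp (-(c * (t - s)))) (Iic t) := by
    rw [hsplit]; exact (integrableOn_exp_mul_Iic hc t).const_mul _
  calc ∫⁻ s in Ioc 0 t, ENNReal.ofReal (exp (-(c * (t - s))))
      ≤ ∫⁻ s in Iic t, ENNReal.ofReal (exp (-(c * (t - s)))) :=
        lintegral_mono_set Ioc_subset_Iic_self
    _ = ENNReal.ofReal (∫ s in Iic t, exp (-(c * (t - s)))) :=
        (ofReal_integral_eq_lintegral_ofReal hint (ae_of_all _ fun _ => exp_nonneg _)).symm
    _ = ENNReal.ofReal c⁻¹ := by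
        rw [hsplit, integral_const_mul, integral_exp_mul_Iic hc, mul_div_assoc', ← exp_add,
          neg_add_cancel, exp_zero, one_div]

lemma exp_neg_jap_mul_exp_neg_rpow_le {θ p : ℝ} (hθ : 0 ≤ θ) (hp0 : 0 ≤ p) (hp1 : p ≤ 1)
    (s t : ℝ) :
    exp (-(2 * θ) * jap (t - s)) * exp (-θ * jap s ^ p) ≤
      exp (-θ * jap t ^ p) * exp (-(θ * (t - s))) := by
  have hjap : jap t ^ p ≤ jap s ^ p + jap (t - s) := by
    simpa using rpow_jap_add_le hp0 hp1 s (t - s)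
  have hu : t - s ≤ jap (t - s) := (le_abs_self _).trans (abs_le_jap _)
  rw [← exp_add, ← exp_add, exp_le_exp]
  nlinarith

lemma lintegral_kernel_mul_decay_le {θ p K a t : ℝ} (hθ : 0 < θ) (hp0 : 0 ≤ p) (hp1 : p ≤ 1)
    (hK : 0 ≤ K) (ha : 0 ≤ a) {F : ℝ → ℝ≥0∞}
    (hF : ∀ s, 0 ≤ s → F s ≤ ENNReal.ofReal (a * exp (-θ * jap s ^ p))) :
    ∫⁻ s in Ioc 0 t, ENNReal.ofReal (K * exp (-(2 * θ) * jap (t - s))) * F s ≤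
      ENNReal.ofReal (K / θ * (a * exp (-θ * jap t ^ p))) := by
  set M := K * (a * exp (-θ * jap t ^ p)) with hM
  calc ∫⁻ s in Ioc 0 t, ENNReal.ofReal (K * exp (-(2 * θ) * jap (t - s))) * F s
      ≤ ∫⁻ s in Ioc 0 t, ENNReal.ofReal M * ENNReal.ofReal (exp (-(θ * (t - s)))) := by
        refine setLIntegral_mono' measurableSet_Ioc fun s hs => ?_
        calc ENNReal.ofReal (K * exp (-(2 * θ) * jap (t - s))) * F s
            ≤ ENNReal.ofReal (K * exp (-(2 * θ) * jap (t - s))) *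
                ENNReal.ofReal (a * exp (-θ * jap s ^ p)) := by gcongr; exact hF s hs.1.le
          _ ≤ ENNReal.ofReal M * ENNReal.ofReal (exp (-(θ * (t - s)))) := by
            rw [← ENNReal.ofReal_mul (by positivity), ← ENNReal.ofReal_mul (by positivity)]
            refine ENNReal.ofReal_le_ofReal ?_
            have := exp_neg_jap_mul_exp_neg_rpow_le hθ.le hp0 hp1 s t
            calc K * exp (-(2 * θ) * jap (t - s)) * (a * exp (-θ * jap s ^ p))
                = K * a * (exp (-(2 * θ) * jap (t - s)) * exp (-θ * jap s ^ p)) := by ring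
              _ ≤ K * a * (exp (-θ * jap t ^ p) * exp (-(θ * (t - s)))) := by gcongr
              _ = M * exp (-(θ * (t - s))) := by ring
    _ = ENNReal.ofReal M * ∫⁻ s in Ioc 0 t, ENNReal.ofReal (exp (-(θ * (t - s)))) :=
        lintegral_const_mul' _ _ ENNReal.ofReal_ne_top
    _ ≤ ENNReal.ofReal M * ENNReal.ofReal θ⁻¹ := by
        gcongr; exact lintegral_Ioc_exp_neg_mul_sub_le hθ t
    _ = ENNReal.ofReal (K / θ * (a * exp (-θ * jap t ^ p))) := by
        rw [← ENNReal.ofReal_mul (by positivity), hM]; ring_nf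

lemma ofReal_mul_norm {E : Type*} [SeminormedAddGroup E] {w : ℝ} (hw : 0 ≤ w) (x : E) :
    ENNReal.ofReal (w * ‖x‖) = ENNReal.ofReal w * ‖x‖ₑ := by
  rw [ENNReal.ofReal_mul hw, ofReal_norm]

lemma fnorm_add_intervalIntegral_le {d : ℕ} {σ t : ℝ} (z : ℝ → ℝ) (g : ℝ → ℝ≥0∞)
    (Gr S : (Fin d → ℤ) → ℝ → ℂ) (ht : 0 ≤ t)
    (hG : ∀ k : Fin d → ℤ, k ≠ 0 → ∀ s ∈ Ioc 0 t,
      ENNReal.ofReal (wA d σ (z t) k (t • toE k)) * ‖Gr k (t - s)‖ₑ ≤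
        g s * ENNReal.ofReal (wA d σ (z s) k (s • toE k))) :
    Fnorm d σ (fun k τ => S k τ + ∫ s in (0 : ℝ)..τ, Gr k (τ - s) * S k s) t (z t) ≤
      Fnorm d σ S t (z t) + ∫⁻ s in Ioc 0 t, g s * Fnorm d σ S s (z s) := by
  have hmode : ∀ k : {k : Fin d → ℤ // k ≠ 0},
      ENNReal.ofReal (wA d σ (z t) k.1 (t • toE k.1) *
          ‖S k.1 t + ∫ s in (0 : ℝ)..t, Gr k.1 (t - s) * S k.1 s‖) ≤
        ENNReal.ofReal (wA d σ (z t) k.1 (t • toE k.1) * ‖S k.1 t‖) +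
          ∫⁻ s in Ioc 0 t, g s * ENNReal.ofReal (wA d σ (z s) k.1 (s • toE k.1) * ‖S k.1 s‖) := by
    rintro ⟨k, hk⟩
    set W := ENNReal.ofReal (wA d σ (z t) k (t • toE k))
    have hI : ‖∫ s in (0 : ℝ)..t, Gr k (t - s) * S k s‖ₑ ≤
        ∫⁻ s in Ioc 0 t, ‖Gr k (t - s)‖ₑ * ‖S k s‖ₑ := by
      rw [intervalIntegral.integral_of_le ht]
      simpa only [enorm_mul] using
        enorm_integral_le_lintegral_enorm (μ := volume.restrict (Ioc 0 t))
          fun s => Gr k (t - s) * S k s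
    rw [ofReal_mul_norm (wA_nonneg _ _ _ _), ofReal_mul_norm (wA_nonneg _ _ _ _)]
    calc W * ‖S k t + ∫ s in (0 : ℝ)..t, Gr k (t - s) * S k s‖ₑ
        ≤ W * (‖S k t‖ₑ + ∫⁻ s in Ioc 0 t, ‖Gr k (t - s)‖ₑ * ‖S k s‖ₑ) := by
          gcongr; exact (enorm_add_le _ _).trans (by gcongr)
      _ = W * ‖S k t‖ₑ + ∫⁻ s in Ioc 0 t, W * ‖Gr k (t - s)‖ₑ * ‖S k s‖ₑ := by
          simp_rw [mul_add, mul_assoc]; rw [lintegral_const_mul' _ _ ENNReal.ofReal_ne_top]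
      _ ≤ _ := by
          gcongr 1
          refine setLIntegral_mono' measurableSet_Ioc fun s hs => ?_
          rw [ofReal_mul_norm (wA_nonneg _ _ _ _), ← mul_assoc]
          exact mul_le_mul_left (hG k hk s hs) _
  calc Fnorm d σ (fun k τ => S k τ + ∫ s in (0 : ℝ)..τ, Gr k (τ - s) * S k s) t (z t)
      ≤ Fnorm d σ S t (z t) + ∑' k : {k : Fin d → ℤ // k ≠ 0},
          ∫⁻ s in Ioc 0 t, g s * ENNReal.ofReal (wA d σ (z s) k.1 (s • toE k.1) * ‖S k.1 s‖) := by
        rw [Fnorm, Fnorm, ← ENNReal.tsum_add]; exact ENNReal.tsum_le_tsum hmode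
    _ ≤ Fnorm d σ S t (z t) + ∫⁻ s in Ioc 0 t, g s * Fnorm d σ S s (z s) := by
        gcongr
        refine (tsum_lintegral_le_lintegral_tsum _ _).trans_eq ?_
        simp_rw [ENNReal.tsum_mul_left, Fnorm]

lemma ofReal_wA_lam_mul_enorm_le_of_norm_le {d : ℕ} {σ lam0 δ θ₀ κ C_G s t : ℝ} (hσ : 0 ≤ σ)
    (hl : 0 ≤ lam0) (hδ : 0 ≤ δ) (hκ : 0 ≤ κ) (hθ : 2 * lam0 + κ < θ₀) (hCG : 0 ≤ C_G)
    {k : Fin d → ℤ} (hk : k ≠ 0) (hs : 0 ≤ s) (hst : s ≤ t) {G : ℂ}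
    (hG : ‖G‖ ≤ C_G * (japV (toE k))⁻¹ * exp (-θ₀ * jap (‖toE k‖ * (t - s)))) :
    ENNReal.ofReal (wA d σ (lam lam0 δ t) k (t • toE k)) * ‖G‖ₑ ≤
      ENNReal.ofReal (C_G * (√2 ^ σ * ((⌈σ⌉₊ ! : ℝ) / (θ₀ - 2 * lam0 - κ) ^ ⌈σ⌉₊)) *
          exp (-κ * jap (t - s))) * ENNReal.ofReal (wA d σ (lam lam0 δ s) k (s • toE k)) := by
  have ht : 0 ≤ t := hs.trans hst
  have hε : 0 < θ₀ - 2 * lam0 - κ := by linarith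
  have hinv : (japV (toE k))⁻¹ ≤ 1 := inv_le_one_of_one_le₀ (one_le_jap _)
  have hW := wA_add_smul_mul_exp_neg_le hσ (lam_nonneg hl ht) (lam_le_lam hl hδ hs hst)
    (lam_le_two_mul hl hδ ht) hκ hθ hk (sub_nonneg.mpr hst) (s • toE k)
  rw [← add_smul, add_sub_cancel] at hW
  rw [← ofReal_norm, ← ENNReal.ofReal_mul (wA_nonneg _ _ _ _),
    ← ENNReal.ofReal_mul (by positivity)]
  refine ENNReal.ofReal_le_ofReal ?_
  calc wA d σ (lam lam0 δ t) k (t • toE k) * ‖G‖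
      ≤ wA d σ (lam lam0 δ t) k (t • toE k) * (C_G * exp (-θ₀ * jap (‖toE k‖ * (t - s)))) := by
        refine mul_le_mul_of_nonneg_left (hG.trans ?_) (wA_nonneg _ _ _ _)
        gcongr
        simpa using mul_le_mul_of_nonneg_left hinv hCG
    _ = C_G * (wA d σ (lam lam0 δ t) k (t • toE k) *
          exp (-θ₀ * jap (‖toE k‖ * (t - s)))) := by ring
    _ ≤ _ := by rw [mul_assoc C_G, mul_assoc C_G]; gcongr

theorem electric_field_decay_general (d : ℕ) (σ lam0 δ θ₀ C_G : ℝ)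
    (hσ : 0 ≤ σ) (hl : 0 < lam0) (hδ0 : 0 < δ) (hδ1 : δ < 1)
    (hCG : 0 < C_G)
    (θ₁ : ℝ) (hθ₁ : 0 < θ₁) (hθθ : 2 * θ₁ < θ₀ - 2 * lam0) :
    ∃ C₂ > (0:ℝ), ∀ a > (0:ℝ),
      ∀ Gr : (Fin d → ℤ) → ℝ → ℂ,
      (∀ k : Fin d → ℤ, k ≠ 0 → ∀ τ : ℝ, 0 ≤ τ →
        ‖Gr k τ‖ ≤ C_G * (japV (toE k))⁻¹ * Real.exp (-θ₀ * jap (‖toE k‖ * τ))) →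
      ∀ S : (Fin d → ℤ) → ℝ → ℂ, (∀ k, Measurable (S k)) →
      (∀ s : ℝ, 0 ≤ s →
        Fnorm d σ S s (lam lam0 δ s) ≤
          ENNReal.ofReal (a * Real.exp (-θ₁ * jap s ^ (1 - δ)))) →
      ∀ t : ℝ, 0 ≤ t →
        Fnorm d σ (fun k τ => S k τ + ∫ s in (0:ℝ)..τ, Gr k (τ - s) * S k s)
            t (lam lam0 δ t) ≤
          ENNReal.ofReal (C₂ * a * Real.exp (-θ₁ * jap t ^ (1 - δ))) := by
  set K := C_G * (√2 ^ σ * ((⌈σ⌉₊ ! : ℝ) / (θ₀ - 2 * lam0 - 2 * θ₁) ^ ⌈σ⌉₊))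
  have hK : 0 ≤ K := by
    have : 0 < θ₀ - 2 * lam0 - 2 * θ₁ := by linarith
    positivity
  refine ⟨1 + K / θ₁, by positivity, fun a ha Gr hGr S _ hS t ht => ?_⟩
  have hkernel : ∀ k : Fin d → ℤ, k ≠ 0 → ∀ s ∈ Ioc 0 t,
      ENNReal.ofReal (wA d σ (lam lam0 δ t) k (t • toE k)) * ‖Gr k (t - s)‖ₑ ≤
        ENNReal.ofReal (K * exp (-(2 * θ₁) * jap (t - s))) *
          ENNReal.ofReal (wA d σ (lam lam0 δ s) k (s • toE k)) := fun k hk s hs =>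
    ofReal_wA_lam_mul_enorm_le_of_norm_le hσ hl.le hδ0.le (by linarith) (by linarith) hCG.le hk
      hs.1.le hs.2 (hGr k hk (t - s) (sub_nonneg.mpr hs.2))
  calc _ ≤ Fnorm d σ S t (lam lam0 δ t) + ∫⁻ s in Ioc 0 t,
          ENNReal.ofReal (K * exp (-(2 * θ₁) * jap (t - s))) * Fnorm d σ S s (lam lam0 δ s) :=
        fnorm_add_intervalIntegral_le (lam lam0 δ) _ Gr S ht hkernel
    _ ≤ ENNReal.ofReal (a * exp (-θ₁ * jap t ^ (1 - δ))) +
          ENNReal.ofReal (K / θ₁ * (a * exp (-θ₁ * jap t ^ (1 - δ)))) :=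
        add_le_add (hS t ht)
          (lintegral_kernel_mul_decay_le hθ₁ (by linarith) (by linarith) hK ha.le hS)
    _ = _ := by rw [← ENNReal.ofReal_add (by positivity) (by positivity)]; ring_nf

/-- decay of the full electric field `E_k(t) = S_k(t) + ∫₀^t G^r_k(t-s) S_k(s) ds`:
if `F[S](s,λ(s)) ≤ a e^{-θ₁⟨s⟩^{1-δ}}` and the Green kernel satisfies
`|G^r_k(τ)| ≤ C_G ⟨k⟩^{-1} e^{-θ₀⟨|k|τ⟩}`, then `F[E](t,λ(t)) ≤ C₂ a e^{-θ₁⟨t⟩^{1-δ}}`. -/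
theorem electric_field_decay (d : ℕ) (hd : 1 ≤ d) (σ lam0 δ θ₀ C_G : ℝ)
    (hσ : 0 ≤ σ) (hl : 0 < lam0) (hδ0 : 0 < δ) (hδ1 : δ < 1)
    (hθ₀ : θ₀ > 2 * lam0) (hCG : 0 < C_G)
    (θ₁ : ℝ) (hθ₁ : 0 < θ₁) (hθθ : 2 * θ₁ < θ₀ - 2 * lam0) :
    ∃ C₂ > (0:ℝ), ∀ a > (0:ℝ),
      ∀ Gr : (Fin d → ℤ) → ℝ → ℂ,
      (∀ k : Fin d → ℤ, k ≠ 0 → ∀ τ : ℝ, 0 ≤ τ →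
        ‖Gr k τ‖ ≤ C_G * (japV (toE k))⁻¹ * Real.exp (-θ₀ * jap (‖toE k‖ * τ))) →
      ∀ S : (Fin d → ℤ) → ℝ → ℂ, (∀ k, Measurable (S k)) →
      (∀ s : ℝ, 0 ≤ s →
        Fnorm d σ S s (lam lam0 δ s) ≤
          ENNReal.ofReal (a * Real.exp (-θ₁ * jap s ^ (1 - δ)))) →
      ∀ t : ℝ, 0 ≤ t →
        Fnorm d σ (fun k τ => S k τ + ∫ s in (0:ℝ)..τ, Gr k (τ - s) * S k s)
            t (lam lam0 δ t) ≤
          ENNReal.ofReal (C₂ * a * Real.exp (-θ₁ * jap t ^ (1 - δ))) :=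
  electric_field_decay_general d σ lam0 δ θ₀ C_G hσ hl hδ0 hδ1 hCG θ₁ hθ₁ hθθ
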